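/- After one Lüders measurement of a randomly chosen Yu–Oh projector on a Yu–Oh state, exactly 25 distinct rays can occur: the set S₁ is finite and has cardinality 25. -/

import Mathlib

open scoped InnerProductSpace

noncomputable def v : Fin 13 → EuclideanSpace ℂ (Fin 3) :=
  ![!₂[1, 0, 0], !₂[0, 1, 0], !₂[0, 0, 1],
    !₂[0, 1, -1], !₂[0, 1, 1], !₂[1, 0, -1], !₂[1, 0, 1], !₂[1, -1, 0], !₂[1, 1, 0],
    !₂[1, 1, 1], !₂[-1, 1, 1], !₂[1, -1, 1], !₂[1, 1, -1]]

noncomputable def P (i : Fin 13) (w : EuclideanSpace ℂ (Fin 3)) : EuclideanSpace ℂ (Fin 3) :=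
  (Submodule.orthogonalProjectionOnto (Submodule.span ℂ {v i}) w : EuclideanSpace ℂ (Fin 3))

noncomputable def S : ℕ → Set (Submodule ℂ (EuclideanSpace ℂ (Fin 3)))
  | 0 => {L | ∃ i : Fin 13, L = Submodule.span ℂ {v i}}
  | (n + 1) => {L | ∃ L' ∈ S n, ∃ w ∈ L', w ≠ 0 ∧ ∃ i : Fin 13,
      (P i w ≠ 0 ∧ L = Submodule.span ℂ {P i w}) ∨
      (w - P i w ≠ 0 ∧ L = Submodule.span ℂ {w - P i w})}

/-!
Measuring `P i` on the ray of `v j` gives either the ray of `v i` or the ray of the rejection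
`v j - P i (v j)`, and `‖v i‖² • (v j - P i (v j))` has integer coordinates. Two nonzero integer
vectors span the same complex line iff their cross product vanishes, so the claim becomes a finite
computation: every nonzero rejection is parallel to a Yu–Oh vector or to one of the twelve vectors
obtained from `(2, ±1, ±1)` by permuting coordinates (up to sign), each of these twelve occurs, and
the resulting 25 integer vectors are pairwise non-parallel.
-/

open Matrix Submodule

theorem Submodule.span_starProjection_singleton {𝕜 E : Type*} [RCLike 𝕜] [NormedAddCommGroup E]
    [InnerProductSpace 𝕜 E] {u w : E} (h : (𝕜 ∙ u).starProjection w ≠ 0) :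
    (𝕜 ∙ (𝕜 ∙ u).starProjection w) = 𝕜 ∙ u := by
  rw [starProjection_singleton] at h ⊢
  exact span_singleton_smul_eq (IsUnit.mk0 _ (left_ne_zero_of_smul h)) u

def ofInt (a : Fin 3 → ℤ) : EuclideanSpace ℂ (Fin 3) := WithLp.toLp 2 fun k => (a k : ℂ)

theorem ofInt_injective : Function.Injective ofInt := fun a b h => by
  funext k
  simpa [ofInt] using congrFun (congrArg WithLp.ofLp h) k

theorem ofInt_eq_zero_iff {a : Fin 3 → ℤ} : ofInt a = 0 ↔ a = 0 :=
  ofInt_injective.eq_iff' (by ext; simp [ofInt])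

theorem inner_ofInt (a b : Fin 3 → ℤ) : ⟪ofInt a, ofInt b⟫_ℂ = ((a ⬝ᵥ b : ℤ) : ℂ) := by
  simp [ofInt, PiLp.inner_apply, dotProduct, mul_comm]

theorem smul_sub_starProjection_ofInt (a b : Fin 3 → ℤ) :
    ((a ⬝ᵥ a : ℤ) : ℂ) • (ofInt b - (ℂ ∙ ofInt a).starProjection (ofInt b)) =
      ofInt ((a ⬝ᵥ a) • b - (a ⬝ᵥ b) • a) := by
  have h := smul_starProjection_singleton ℂ (v := ofInt a) (ofInt b)
  rw [RCLike.ofReal_pow, ← inner_self_eq_norm_sq_to_K, inner_ofInt, inner_ofInt] at h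
  rw [smul_sub, h]
  ext k
  simp [ofInt]

theorem span_ofInt_eq_iff {a b : Fin 3 → ℤ} (ha : a ≠ 0) (hb : b ≠ 0) :
    (ℂ ∙ ofInt a) = (ℂ ∙ ofInt b) ↔ a ⨯₃ b = 0 := by
  have hcross : (ofInt a).ofLp ⨯₃ (ofInt b).ofLp = (ofInt (a ⨯₃ b)).ofLp := by
    ext k
    fin_cases k <;> simp [ofInt, cross_apply]
  have hb' : (ofInt b).ofLp ≠ 0 := by simpa [ofInt_eq_zero_iff] using hb
  rw [← ofInt_eq_zero_iff, ← WithLp.ofLp_eq_zero, ← hcross,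
    crossProduct_ne_zero_iff_linearIndependent.not_right,
    LinearIndependent.pair_iff' (by simpa [ofInt_eq_zero_iff] using ha),
    span_singleton_eq_span_singleton, not_forall_not]
  constructor
  · rintro ⟨z, hz⟩
    exact ⟨z, congrArg WithLp.ofLp hz⟩
  · rintro ⟨t, ht⟩
    have ht0 : t ≠ 0 := by rintro rfl; exact hb' (by rw [← ht, zero_smul])
    exact ⟨Units.mk0 t ht0, congrArg (WithLp.toLp 2) ht⟩

def vInt : Fin 13 → Fin 3 → ℤ :=
  ![![1, 0, 0], ![0, 1, 0], ![0, 0, 1],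
    ![0, 1, -1], ![0, 1, 1], ![1, 0, -1], ![1, 0, 1], ![1, -1, 0], ![1, 1, 0],
    ![1, 1, 1], ![-1, 1, 1], ![1, -1, 1], ![1, 1, -1]]

def newRayInt : Fin 12 → Fin 3 → ℤ :=
  ![![2, 1, 1], ![2, -1, -1], ![2, 1, -1], ![2, -1, 1],
    ![1, 2, 1], ![-1, 2, -1], ![1, 2, -1], ![-1, 2, 1],
    ![1, 1, 2], ![-1, -1, 2], ![1, -1, 2], ![-1, 1, 2]]

def rayInt : Fin 25 → Fin 3 → ℤ := Fin.append vInt newRayInt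

def rejectionInt (i j : Fin 13) : Fin 3 → ℤ :=
  (vInt i ⬝ᵥ vInt i) • vInt j - (vInt i ⬝ᵥ vInt j) • vInt i

theorem rayInt_castAdd (i : Fin 13) : rayInt (Fin.castAdd 12 i) = vInt i := by
  simp [rayInt]

theorem rayInt_ne_zero : ∀ k, rayInt k ≠ 0 := by decide

theorem eq_of_rayInt_cross_eq_zero : ∀ k l, rayInt k ⨯₃ rayInt l = 0 → k = l := by decide

theorem exists_rayInt_cross_rejectionInt :
    ∀ i j, rejectionInt i j ≠ 0 → ∃ k, rayInt k ⨯₃ rejectionInt i j = 0 := by decide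

theorem exists_newRayInt_cross_rejectionInt :
    ∀ k, ∃ i j, rejectionInt i j ≠ 0 ∧ newRayInt k ⨯₃ rejectionInt i j = 0 := by decide

theorem dotProduct_vInt_self_ne_zero (i : Fin 13) : vInt i ⬝ᵥ vInt i ≠ 0 := by
  rw [Ne, dotProduct_self_eq_zero, ← rayInt_castAdd]
  exact rayInt_ne_zero _

theorem v_eq_ofInt (i : Fin 13) : v i = ofInt (vInt i) := by
  ext k
  fin_cases i <;> fin_cases k <;> simp [v, vInt, ofInt]

theorem v_ne_zero (i : Fin 13) : v i ≠ 0 := by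
  rw [v_eq_ofInt, Ne, ofInt_eq_zero_iff, ← rayInt_castAdd]
  exact rayInt_ne_zero _

theorem P_eq_starProjection (i : Fin 13) (w : EuclideanSpace ℂ (Fin 3)) :
    P i w = (ℂ ∙ v i).starProjection w :=
  (starProjection_apply _ w).symm

theorem P_smul (i : Fin 13) (t : ℂ) (w : EuclideanSpace ℂ (Fin 3)) : P i (t • w) = t • P i w := by
  simp only [P_eq_starProjection, map_smul]

theorem P_self (i : Fin 13) : P i (v i) = v i := by
  rw [P_eq_starProjection, starProjection_eq_self_iff]
  exact mem_span_singleton_self _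

theorem dotProduct_smul_rejection (i j : Fin 13) :
    ((vInt i ⬝ᵥ vInt i : ℤ) : ℂ) • (v j - P i (v j)) = ofInt (rejectionInt i j) := by
  rw [P_eq_starProjection, v_eq_ofInt, v_eq_ofInt]
  exact smul_sub_starProjection_ofInt _ _

theorem rejection_ne_zero_iff {i j : Fin 13} : v j - P i (v j) ≠ 0 ↔ rejectionInt i j ≠ 0 := by
  rw [Ne, Ne, ← ofInt_eq_zero_iff, ← dotProduct_smul_rejection,
    smul_eq_zero_iff_right (Int.cast_ne_zero.2 (dotProduct_vInt_self_ne_zero i))]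

theorem span_rejection (i j : Fin 13) :
    (ℂ ∙ (v j - P i (v j))) = ℂ ∙ ofInt (rejectionInt i j) := by
  rw [← dotProduct_smul_rejection,
    span_singleton_smul_eq (IsUnit.mk0 _ (Int.cast_ne_zero.2 (dotProduct_vInt_self_ne_zero i)))]

theorem mem_S_one_iff {L : Submodule ℂ (EuclideanSpace ℂ (Fin 3))} :
    L ∈ S 1 ↔ (∃ i, L = ℂ ∙ v i) ∨ ∃ i j, v j - P i (v j) ≠ 0 ∧ L = ℂ ∙ (v j - P i (v j)) := by
  constructor
  · rintro ⟨_, ⟨j, rfl⟩, w, hw, -, i, ⟨hP, rfl⟩ | ⟨hR, rfl⟩⟩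
    · rw [P_eq_starProjection] at hP ⊢
      exact Or.inl ⟨i, span_starProjection_singleton hP⟩
    · obtain ⟨t, rfl⟩ := mem_span_singleton.1 hw
      rw [P_smul, ← smul_sub] at hR ⊢
      exact Or.inr ⟨i, j, right_ne_zero_of_smul hR,
        span_singleton_smul_eq (IsUnit.mk0 t (left_ne_zero_of_smul hR)) _⟩
  · rintro (⟨i, rfl⟩ | ⟨i, j, hR, rfl⟩)
    · exact ⟨_, ⟨i, rfl⟩, v i, mem_span_singleton_self _, v_ne_zero i, i,
        Or.inl ⟨by rw [P_self]; exact v_ne_zero i, by rw [P_self]⟩⟩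
    · exact ⟨_, ⟨j, rfl⟩, v j, mem_span_singleton_self _, v_ne_zero j, i, Or.inr ⟨hR, rfl⟩⟩

theorem S_one_eq_range : S 1 = Set.range fun k => ℂ ∙ ofInt (rayInt k) := by
  ext L
  rw [mem_S_one_iff]
  constructor
  · rintro (⟨i, rfl⟩ | ⟨i, j, hR, rfl⟩)
    · exact ⟨Fin.castAdd 12 i, by simp only [rayInt_castAdd, v_eq_ofInt]⟩
    · rw [rejection_ne_zero_iff] at hR
      obtain ⟨k, hk⟩ := exists_rayInt_cross_rejectionInt i j hR
      exact ⟨k, by rw [span_rejection, span_ofInt_eq_iff (rayInt_ne_zero k) hR, hk]⟩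
  · rintro ⟨k, rfl⟩
    refine Fin.addCases (m := 13) (n := 12) (fun i => ?_) (fun k => ?_) k
    · exact Or.inl ⟨i, by simp only [rayInt_castAdd, v_eq_ofInt]⟩
    · obtain ⟨i, j, hR, hk⟩ := exists_newRayInt_cross_rejectionInt k
      refine Or.inr ⟨i, j, rejection_ne_zero_iff.2 hR, ?_⟩
      rw [span_rejection, span_ofInt_eq_iff (rayInt_ne_zero _) hR]
      simpa [rayInt] using hk

theorem span_ofInt_rayInt_injective : Function.Injective fun k => ℂ ∙ ofInt (rayInt k) :=
  fun k l h =>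
    eq_of_rayInt_cross_eq_zero k l ((span_ofInt_eq_iff (rayInt_ne_zero k) (rayInt_ne_zero l)).1 h)

theorem S1_card : (S 1).Finite ∧ (S 1).ncard = 25 := by
  rw [S_one_eq_range]
  exact ⟨Set.finite_range _,
    by rw [Set.ncard_range_of_injective span_ofInt_rayInt_injective, Nat.card_fin]⟩
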